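/- The Moser spindle H₀ is not 3-colourable, but deleting any single vertex from H₀ leaves a 3-colourable graph (i.e. H₀ is vertex-critical 4-chromatic). -/
import Mathlib


/-- The Moser spindle `H₀`: vertices `a₀,…,a₆` with edges
`a₀a₁, a₁a₂, a₂a₃, a₃a₄, a₄a₅, a₅a₆, a₆a₀, a₅a₀, a₀a₂, a₁a₃, a₄a₆`. -/
def MoserSpindle : SimpleGraph (Fin 7) :=
  SimpleGraph.fromRel (fun i j => (i, j) ∈
    ([(0, 1), (1, 2), (2, 3), (3, 4), (4, 5), (5, 6), (6, 0), (5, 0), (0, 2), (1, 3), (4, 6)] :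
      List (Fin 7 × Fin 7)))

instance : DecidableRel MoserSpindle.Adj := fun a b =>
  decidable_of_iff' _ (SimpleGraph.fromRel_adj _ a b)

lemma moser_nocol' : ∀ x0 x1 x2 x3 x4 x5 x6 : Fin 3,
    ¬ (x0 ≠ x1 ∧ x1 ≠ x2 ∧ x2 ≠ x3 ∧ x3 ≠ x4 ∧ x4 ≠ x5 ∧ x5 ≠ x6 ∧
       x6 ≠ x0 ∧ x5 ≠ x0 ∧ x0 ≠ x2 ∧ x1 ≠ x3 ∧ x4 ≠ x6) := by
  decide

lemma moser_del (v : Fin 7) :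
    ∃ f : Fin 7 → Fin 3, ∀ u w : Fin 7, u ≠ v → w ≠ v → MoserSpindle.Adj u w → f u ≠ f w := by
  fin_cases v
  · exact ⟨![0, 0, 1, 2, 0, 1, 2], by decide⟩
  · exact ⟨![0, 0, 1, 2, 0, 1, 2], by decide⟩
  · exact ⟨![0, 1, 0, 2, 0, 1, 2], by decide⟩
  · exact ⟨![0, 1, 2, 0, 0, 1, 2], by decide⟩
  · exact ⟨![0, 1, 2, 0, 0, 1, 2], by decide⟩
  · exact ⟨![0, 1, 2, 0, 1, 0, 2], by decide⟩
  · exact ⟨![0, 1, 2, 0, 1, 2, 0], by decide⟩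

/-- The Moser spindle is not 3-colourable, but deleting any single vertex
leaves a 3-colourable graph: `H₀` is vertex-critical 4-chromatic. -/
theorem stmt_19 :
    ¬ MoserSpindle.Colorable 3 ∧
    ∀ v : Fin 7, (MoserSpindle.induce {x | x ≠ v}).Colorable 3 := by
  constructor
  · rintro ⟨c⟩
    exact moser_nocol' (c 0) (c 1) (c 2) (c 3) (c 4) (c 5) (c 6)
      ⟨c.valid (by decide), c.valid (by decide), c.valid (by decide), c.valid (by decide),
       c.valid (by decide), c.valid (by decide), c.valid (by decide), c.valid (by decide),
       c.valid (by decide), c.valid (by decide), c.valid (by decide)⟩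
  · intro v
    obtain ⟨f, hf⟩ := moser_del v
    exact ⟨⟨fun x => f x.1, fun {x y} h => hf x.1 y.1 x.2 y.2 h⟩⟩
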